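/- Let P ⊂ ℝ^d be an integer polytope (all vertices in ℤ^d) that is centrally symmetric and has centrally symmetric facets. Then any two opposite facets of P are translates of each other by an integer vector. -/

import Mathlib

open scoped Pointwise RealInnerProductSpace
open MeasureTheory Filter
open scoped ENNReal

noncomputable section

abbrev Euc (d : ℕ) := EuclideanSpace ℝ (Fin d)

def IsDiscreteFam {d : ℕ} {ι : Type*} (Λ : ι → Euc d) : Prop :=
  ∀ (x : Euc d) (r : ℝ), {i | Λ i ∈ Metric.closedBall x r}.Finite

def IsConvexPolytope {d : ℕ} (P : Set (Euc d)) : Prop :=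
  ∃ V : Finset (Euc d), V.Nonempty ∧ P = convexHull ℝ (V : Set (Euc d))

def CentSymm {d : ℕ} (P : Set (Euc d)) : Prop :=
  ∃ w : Euc d, P = (fun p => w - p) '' P

def kTiles {d : ℕ} {ι : Type*} (P : Set (Euc d)) (Λ : ι → Euc d) (k : ℕ) : Prop :=
  ∀ v : Euc d, (∀ i, v - Λ i ∉ frontier P) → Nat.card {i : ι // v - Λ i ∈ P} = k

def faceIn {d : ℕ} (P : Set (Euc d)) (n : Euc d) : Set (Euc d) :=
  {x | x ∈ P ∧ ∀ y ∈ P, (inner ℝ n y : ℝ) ≤ inner ℝ n x}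

def IsFacet {d : ℕ} (P F : Set (Euc d)) : Prop :=
  ∃ n : Euc d, n ≠ 0 ∧ F = faceIn P n ∧
    Module.finrank ℝ ↥(vectorSpan ℝ F) = d - 1

def intVec {d : ℕ} (m : Fin d → ℤ) : Euc d := WithLp.toLp 2 (fun i => (m i : ℝ))

def solidAngle {d : ℕ} (Q : Set (Euc d)) (x : Euc d) : ℝ :=
  limUnder (nhdsWithin (0:ℝ) (Set.Ioi 0)) fun R =>
    (volume (Metric.ball x R ∩ Q)).toReal / (volume (Metric.ball x R)).toReal

/- The point reflection `x ↦ w - x` fixing `P` maps the face of `P` in direction `n` onto the face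
in direction `-n`; composed with the point reflection fixing that facet it becomes a translation by
some `t`. An extreme point `v` of `F₁` is a vertex of `P`, and `v + t`, an extreme point of the
translate `F₂`, is another one, so `t` is an integer vector. -/

lemma faceIn_image_sub {d : ℕ} (P : Set (Euc d)) (w n : Euc d) :
    faceIn ((w - ·) '' P) (-n) = (w - ·) '' faceIn P n := by
  ext x
  simp only [faceIn, Set.mem_ofPred_eq, Set.forall_mem_image]
  constructor
  · rintro ⟨⟨a, ha, rfl⟩, hmax⟩
    refine ⟨a, ⟨ha, fun b hb => ?_⟩, rfl⟩
    simpa only [inner_neg_left, inner_sub_right, neg_le_neg_iff, sub_le_sub_iff_left] using hmax hb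
  · rintro ⟨a, ⟨ha, hmax⟩, rfl⟩
    refine ⟨⟨a, ha, rfl⟩, fun b hb => ?_⟩
    simpa only [inner_neg_left, inner_sub_right, neg_le_neg_iff, sub_le_sub_iff_left] using hmax b hb

lemma image_sub_eq_image_add_of_eq_image_sub {G : Type*} [AddCommGroup G] {F : Set G} {c : G}
    (hF : F = (c - ·) '' F) (w : G) : (w - ·) '' F = (· + (w - c)) '' F := by
  conv_lhs => rw [hF]
  rw [Set.image_image]
  exact Set.image_congr fun a _ => by abel

lemma faceIn_isExposed {d : ℕ} (P : Set (Euc d)) (n : Euc d) :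
    IsExposed ℝ P (faceIn P n) := fun _ => ⟨innerSL ℝ n, by
  ext x; simp [faceIn, innerSL_apply_apply]⟩

lemma faceIn_nonempty {d : ℕ} {P : Set (Euc d)} (hP : IsCompact P) (hne : P.Nonempty)
    (n : Euc d) : (faceIn P n).Nonempty := by
  obtain ⟨x, hx, hmax⟩ := hP.exists_isMaxOn hne (innerSL ℝ n).continuous.continuousOn
  exact ⟨x, hx, fun y hy => hmax hy⟩

lemma IsExtreme.extremePoints_subset_of_convexHull {E : Type*} [AddCommGroup E] [Module ℝ E]
    {V F : Set E} (hF : IsExtreme ℝ (convexHull ℝ V) F) : F.extremePoints ℝ ⊆ V :=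
  fun _ hx => extremePoints_convexHull_subset (hF.extremePoints_subset_extremePoints hx)

lemma exists_intVec_eq_sub {d : ℕ} {x y : Euc d} (hx : ∀ i, ∃ m : ℤ, x i = m)
    (hy : ∀ i, ∃ m : ℤ, y i = m) : ∃ z, intVec z = y - x := by
  choose a ha using hx
  choose b hb using hy
  exact ⟨b - a, PiLp.ext fun i => by simp [intVec, ha, hb]⟩

theorem stmt5_general {d : ℕ} (P : Set (Euc d)) (V : Finset (Euc d)) (hV : V.Nonempty)
    (hPV : P = convexHull ℝ (V : Set (Euc d)))
    (hintvert : ∀ x ∈ V, ∀ i : Fin d, ∃ m : ℤ, x i = (m : ℝ))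
    (hsym : CentSymm P) (hfacets : ∀ F, IsFacet P F → CentSymm F)
    (n : Euc d) (F₁ F₂ : Set (Euc d))
    (hF₁ : F₁ = faceIn P n) (hF₂ : F₂ = faceIn P (-n))
    (h₁ : IsFacet P F₁) :
    ∃ z : Fin d → ℤ, F₂ = (fun p => p + intVec z) '' F₁ := by
  obtain ⟨w, hw⟩ := hsym
  obtain ⟨c, hc⟩ := hfacets F₁ h₁
  set t := w - c
  have hF₂F₁ : F₂ = (· + t) '' F₁ := by
    rw [← image_sub_eq_image_add_of_eq_image_sub hc, hF₂, hF₁, ← faceIn_image_sub, ← hw]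
  have hPcomp : IsCompact P := hPV ▸ V.finite_toSet.isCompact_convexHull ℝ
  have hPne : P.Nonempty := hPV ▸ hV.to_set.mono (subset_convexHull ℝ _)
  have hextV (m : Euc d) : (faceIn P m).extremePoints ℝ ⊆ V := by
    rw [hPV]
    exact (faceIn_isExposed _ m).isExtreme.extremePoints_subset_of_convexHull
  obtain ⟨u, hu⟩ : (F₂.extremePoints ℝ).Nonempty := hF₂ ▸
    ((faceIn_isExposed P (-n)).isCompact hPcomp).extremePoints_nonempty
      (faceIn_nonempty hPcomp hPne (-n))
  obtain ⟨v, hv, hvu⟩ := surjOn_extremePoints_image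
    (ContinuousAffineEquiv.vaddConst ℝ t).toContinuousAffineMap
    (hF₁ ▸ (faceIn_isExposed P n).isCompact hPcomp) (hF₂F₁ ▸ hu)
  have hu_eq : u = v + t := hvu.symm
  obtain ⟨z, hz⟩ := exists_intVec_eq_sub (hintvert v (hextV n (hF₁ ▸ hv)))
    (hintvert u (hextV (-n) (hF₂ ▸ hu)))
  exact ⟨z, by rwa [hz, hu_eq, add_sub_cancel_left]⟩

/-- for an integer polytope which is centrally symmetric with centrally
symmetric facets, opposite facets are integer translates of one another. -/
theorem stmt5 {d : ℕ} (P : Set (Euc d)) (V : Finset (Euc d)) (hV : V.Nonempty)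
    (hPV : P = convexHull ℝ (V : Set (Euc d)))
    (hintvert : ∀ x ∈ V, ∀ i : Fin d, ∃ m : ℤ, x i = (m : ℝ))
    (hsym : CentSymm P) (hfacets : ∀ F, IsFacet P F → CentSymm F)
    (n : Euc d) (F₁ F₂ : Set (Euc d))
    (hF₁ : F₁ = faceIn P n) (hF₂ : F₂ = faceIn P (-n))
    (h₁ : IsFacet P F₁) (h₂ : IsFacet P F₂) :
    ∃ z : Fin d → ℤ, F₂ = (fun p => p + intVec z) '' F₁ :=
  stmt5_general P V hV hPV hintvert hsym hfacets n F₁ F₂ hF₁ hF₂ h₁
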